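/- Let G be a graph and W ⊆ V(G). If H is a connected (nonempty) subgraph of G with V(H) ∩ W ≠ ∅, then the subgraph of torso_G(W) induced by V(H) ∩ W is connected. -/

import Mathlib

open SimpleGraph

section Defs

variable {V : Type*} {ι : Type*} {α : Type*}

/-- `G` has no `K_t`-minor: there is no family of `t` pairwise disjoint nonempty connected
vertex sets with an edge of `G` between any two of them. -/
def CliqueMinorFree (G : SimpleGraph V) (t : ℕ) : Prop :=
  ¬ ∃ B : Fin t → Set V,
      (∀ i, (G.induce (B i)).Connected) ∧
      (∀ i j, i ≠ j → Disjoint (B i) (B j)) ∧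
      (∀ i j, i ≠ j → ∃ u ∈ B i, ∃ w ∈ B j, G.Adj u w)

/-- `(T, W)` is a tree decomposition of `G`. -/
structure IsTreeDecomp (G : SimpleGraph V) (T : SimpleGraph ι) (W : ι → Set V) : Prop where
  isTree : T.IsTree
  bagsConnected : ∀ u : V, (T.induce {x : ι | u ∈ W x}).Connected
  edgeInBag : ∀ ⦃u w : V⦄, G.Adj u w → ∃ x, u ∈ W x ∧ w ∈ W x

/-- The tree decomposition with bags `W` has width at most `w`. -/
def TDWidthLE (W : ι → Set V) (w : ℕ) : Prop := ∀ x, (W x).ncard ≤ w + 1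

/-- `φ` is a `p`-centered coloring of `G`: every nonempty connected subgraph on which `φ`
uses at most `p` colors has a vertex of unique color. -/
def IsCenteredColoring (p : ℕ) (G : SimpleGraph V) (φ : V → α) : Prop :=
  ∀ H : G.Subgraph, H.Connected →
    p < (φ '' H.verts).ncard ∨ ∃ u ∈ H.verts, ∀ w ∈ H.verts, w ≠ u → φ w ≠ φ u

/-- The `p`-centered chromatic number of `G`. -/
noncomputable def centeredChromaticNumber (p : ℕ) (G : SimpleGraph V) : ℕ :=
  sInf {k | ∃ φ : V → Fin k, IsCenteredColoring p G φ}

/-- `φ` is a `p`-centered coloring of `(G, σ)`: on every nonempty connected subgraph either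
more than `p` colors are used, or the `σ`-minimal vertex has a unique color. -/
def IsOrderedCenteredColoring (p : ℕ) (G : SimpleGraph V) (σ : V → ℕ) (φ : V → α) : Prop :=
  ∀ H : G.Subgraph, H.Connected →
    p < (φ '' H.verts).ncard ∨
      ∃ u ∈ H.verts, (∀ w ∈ H.verts, σ u ≤ σ w) ∧ ∀ w ∈ H.verts, w ≠ u → φ w ≠ φ u

/-- The `p`-centered chromatic number of `(G, σ)`. -/
noncomputable def orderedCenteredChromaticNumber (p : ℕ) (G : SimpleGraph V) (σ : V → ℕ) : ℕ :=
  sInf {k | ∃ φ : V → Fin k, IsOrderedCenteredColoring p G σ φ}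

/-- `σ` (an injection into `ℕ`, representing a linear ordering of the vertices) is an
elimination ordering of the tree decomposition with bags `W`. -/
def IsEliminationOrdering (W : ι → Set V) (σ : V → ℕ) : Prop :=
  Function.Injective σ ∧
    ∀ u : V, ∃ x : ι, ∀ w : V, (∃ z, u ∈ W z ∧ w ∈ W z) → σ w < σ u → w ∈ W x

/-- `Pa` is a partition of the vertex set into nonempty parts. -/
def IsVertexPartition (Pa : Set (Set V)) : Prop :=
  (∀ P ∈ Pa, P.Nonempty) ∧ ∀ u : V, ∃! P, P ∈ Pa ∧ u ∈ P

/-- The quotient graph `G/Pa`. -/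
def quotientGraph (G : SimpleGraph V) (Pa : Set (Set V)) : SimpleGraph Pa where
  Adj P Q := P ≠ Q ∧ ∃ u ∈ (P : Set V), ∃ w ∈ (Q : Set V), G.Adj u w
  symm := ⟨by
    rintro P Q ⟨hPQ, u, hu, w, hw, hadj⟩
    exact ⟨hPQ.symm, w, hw, u, hu, hadj.symm⟩⟩
  loopless := ⟨by rintro P ⟨h, -⟩; exact h rfl⟩

/-- The neighborhood of a set of vertices. -/
def nbhdSet (G : SimpleGraph V) (S : Set V) : Set V :=
  {w | w ∉ S ∧ ∃ u ∈ S, G.Adj u w}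

/-- `C` is (the vertex set of) a connected component of `G - Z`. -/
def IsCompOfDel (G : SimpleGraph V) (Z C : Set V) : Prop :=
  Disjoint C Z ∧ (G.induce C).Connected ∧
    ∀ u ∈ C, ∀ w, G.Adj u w → w ∉ Z → w ∈ C

/-- The neighborhood of a set of vertices in a subgraph. -/
def subNbhdSet {G : SimpleGraph V} (G₀ : G.Subgraph) (S : Set V) : Set V :=
  {w | w ∉ S ∧ ∃ u ∈ S, G₀.Adj u w}

/-- `C` is (the vertex set of) a connected component of `G₀ - Z`, for a subgraph `G₀`. -/
def IsCompOfSubDel {G : SimpleGraph V} (G₀ : G.Subgraph) (Z C : Set V) : Prop :=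
  C ⊆ G₀.verts \ Z ∧ (G₀.induce C).Connected ∧
    ∀ u ∈ C, ∀ w ∈ G₀.verts \ Z, G₀.Adj u w → w ∈ C

/-- `φ` is a `(p,c)`-good coloring of `G`. -/
def IsGoodColoring (p c : ℕ) (G : SimpleGraph V) (φ : V → ℕ) : Prop :=
  ∀ G₀ : G.Subgraph, ∀ 𝓕 : Set G.Subgraph,
    (∀ F ∈ 𝓕, F ≤ G₀ ∧ F.Connected) →
    ∀ d : ℕ, 0 < d →
      (¬ ∃ f : Fin (d + 1) → G.Subgraph,
          (∀ i, f i ∈ 𝓕) ∧ ∀ i j, i ≠ j → Disjoint (f i).verts (f j).verts) →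
      ∃ Z : Set V, Z ⊆ G₀.verts ∧ ∃ ψ : V → ℕ,
        (∀ u ∈ Z, 1 ≤ ψ u ∧ ψ u ≤ c * d) ∧
        (∀ F ∈ 𝓕, (F.verts ∩ Z).Nonempty) ∧
        (∀ H : G.Subgraph, H ≤ G₀ → H.Connected → (H.verts ∩ Z).Nonempty →
          p < (φ '' H.verts).ncard ∨
            ∃ u ∈ H.verts ∩ Z, ∀ w ∈ H.verts ∩ Z, w ≠ u → (φ w, ψ w) ≠ (φ u, ψ u)) ∧
        (∀ C : Set V, IsCompOfSubDel G₀ Z C →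
          ∃ D₁ D₂ : Set V, ∀ D, IsCompOfSubDel G₀ C D →
            (subNbhdSet G₀ C ∩ D).Nonempty → D = D₁ ∨ D = D₂)

/-- Adjacency in the torso of `W` in `G`: two distinct vertices of `W` joined by a
walk of `G` all of whose internal vertices avoid `W`. -/
def TorsoAdj (G : SimpleGraph V) (W : Set V) (u w : V) : Prop :=
  u ∈ W ∧ w ∈ W ∧ u ≠ w ∧
    ∃ q : G.Walk u w, ∀ x ∈ q.support, x ∈ W → x = u ∨ x = w

/-- The torso of `W` in `G`. -/
def torso (G : SimpleGraph V) (W : Set V) : SimpleGraph W where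
  Adj u w := TorsoAdj G W ↑u ↑w
  symm := ⟨by
    intro u w h
    obtain ⟨hu, hw, hne, q, hq⟩ := h
    exact ⟨hw, hu, hne.symm, q.reverse, fun x hx hxW => by
      rw [Walk.support_reverse, List.mem_reverse] at hx
      exact (hq x hx hxW).symm⟩⟩
  loopless := ⟨by
    intro u h
    exact h.2.2.1 rfl⟩

/-- In the tree `T` rooted at `r`, the vertex `u` is an ancestor of `w`
(i.e. `u` lies on every walk from the root to `w`). -/
def IsAncestor (T : SimpleGraph α) (r u w : α) : Prop :=
  ∀ q : T.Walk r w, u ∈ q.support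

/-- `x` is the lowest common ancestor of `u` and `w` in the tree `T` rooted at `r`. -/
def IsLCA (T : SimpleGraph α) (r x u w : α) : Prop :=
  IsAncestor T r x u ∧ IsAncestor T r x w ∧
    ∀ y, IsAncestor T r y u → IsAncestor T r y w → IsAncestor T r y x

/-- The lowest common ancestor closure of `Y` in the tree `T` rooted at `r`. -/
def lcaClosure (T : SimpleGraph α) (r : α) (Y : Set α) : Set α :=
  {x | ∃ u ∈ Y, ∃ w ∈ Y, IsLCA T r x u w}

/-- The vertex set of `T_{x|y}`: the component of `x` in `T` minus the edge `xy`.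
(For adjacent `x y` in a tree these are the vertices `z` such that
the path from `z` to `y` passes through `x`.) -/
def sideVerts (T : SimpleGraph α) (x y : α) : Set α :=
  {z | ∀ q : T.Walk z y, x ∈ q.support}

/-- The tree decomposition `(T, W)` of `G` is natural. -/
def IsNaturalTD (G : SimpleGraph V) (T : SimpleGraph ι) (W : ι → Set V) : Prop :=
  ∀ x y, T.Adj x y → (G.induce (⋃ z ∈ sideVerts T x y, W z)).Connected

end Defs

/-!
Cut a walk of `H` between two vertices of `W` at its intermediate vertices in `W`: between two
consecutive such cut points the walk avoids `W`, so the two cut points are equal or adjacent in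
the torso, and both lie in `V(H)`.
-/

namespace SimpleGraph

variable {V : Type*} {G : SimpleGraph V} {W S : Set V}

lemma reachable_torso_induce_of_walk_avoiding {u w : V} (hu : u ∈ W) (hw : w ∈ W)
    (huS : u ∈ S) (hwS : w ∈ S) (q : G.Walk u w)
    (hq : ∀ x ∈ q.support, x ∈ W → x = u ∨ x = w) :
    ((torso G W).induce {x : W | (x : V) ∈ S}).Reachable ⟨⟨u, hu⟩, huS⟩ ⟨⟨w, hw⟩, hwS⟩ := by
  by_cases huw : u = w
  · subst huw
    rfl
  · exact Adj.reachable ⟨hu, hw, huw, q, hq⟩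

/-- `r` is the part of the walk already traversed since its last vertex `a` in `W`. -/
lemma reachable_torso_induce_of_walk_aux {v w : V} (q : G.Walk v w) (hw : w ∈ W)
    (hqS : ∀ y ∈ q.support, y ∈ S) {a : V} (ha : a ∈ W) (haS : a ∈ S) (r : G.Walk a v)
    (hr : ∀ y ∈ r.support, y ∈ W → y = a ∨ y = v) :
    ((torso G W).induce {x : W | (x : V) ∈ S}).Reachable
      ⟨⟨a, ha⟩, haS⟩ ⟨⟨w, hw⟩, hqS w q.end_mem_support⟩ := by
  induction q generalizing a with
  | nil => exact reachable_torso_induce_of_walk_avoiding ha hw haS _ r hr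
  | @cons x y w hxy q ih =>
    have hq'S : ∀ z ∈ q.support, z ∈ S := fun z hz => hqS z (List.mem_cons_of_mem _ hz)
    by_cases hxW : x ∈ W
    · have hxS : x ∈ S := hqS x q.support.mem_cons_self
      refine (reachable_torso_induce_of_walk_avoiding ha hxW haS hxS r hr).trans ?_
      refine ih hw hq'S hxW hxS (Walk.cons hxy Walk.nil) fun z hz _ => ?_
      simpa using hz
    · refine ih hw hq'S ha haS (r.concat hxy) fun z hz hzW => ?_
      rw [Walk.support_concat, List.mem_append, List.mem_singleton] at hz
      rcases hz with hz | rfl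
      · exact Or.inl ((hr z hz hzW).resolve_right fun h => hxW (h ▸ hzW))
      · exact Or.inr rfl

lemma reachable_torso_induce_of_walk {u w : V} (hu : u ∈ W) (hw : w ∈ W) (q : G.Walk u w)
    (hqS : ∀ y ∈ q.support, y ∈ S) :
    ((torso G W).induce {x : W | (x : V) ∈ S}).Reachable
      ⟨⟨u, hu⟩, hqS u q.start_mem_support⟩ ⟨⟨w, hw⟩, hqS w q.end_mem_support⟩ :=
  reachable_torso_induce_of_walk_aux q hw hqS hu _ Walk.nil (by simp)

end SimpleGraph

theorem torso_projection_connected_general {V : Type} (G : SimpleGraph V) (W : Set V)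
    (H : G.Subgraph) (hH : H.Connected) (hmeet : (H.verts ∩ W).Nonempty) :
    ((torso G W).induce {x : W | (x : V) ∈ H.verts}).Connected := by
  obtain ⟨v, hvH, hvW⟩ := hmeet
  rw [connected_iff]
  refine ⟨?_, ⟨⟨⟨v, hvW⟩, hvH⟩⟩⟩
  rintro ⟨⟨a, haW⟩, haH⟩ ⟨⟨b, hbW⟩, hbH⟩
  obtain ⟨p, hpH⟩ := (Subgraph.connected_iff_forall_exists_walk_subgraph H).1 hH |>.2 haH hbH
  exact reachable_torso_induce_of_walk haW hbW p
    fun y hy => hpH.1 (p.mem_verts_toSubgraph.2 hy)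

/-- if `H` is a nonempty connected subgraph of `G` meeting `W ⊆ V(G)`, then
the subgraph of `torso_G(W)` induced by `V(H) ∩ W` is connected. -/
theorem torso_projection_connected {V : Type} [Fintype V] (G : SimpleGraph V) (W : Set V)
    (H : G.Subgraph) (hH : H.Connected) (hmeet : (H.verts ∩ W).Nonempty) :
    ((torso G W).induce {x : W | (x : V) ∈ H.verts}).Connected :=
  torso_projection_connected_general G W H hH hmeet
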